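/- Assume the hierarchy S is well-formed. Then the join operator on the extended hierarchy is associative, commutative, and idempotent; that is, the extended well-formed hierarchy equipped with join is a join-semilattice. -/

import Mathlib

/-!
Since `S` is finite, every common upper bound `e` of `a` and `b` lies above a minimal one, which
by well-formedness is the unique element of `mcs a b`. Hence `hjoin x y ≤ d ↔ x ≤ d ∧ y ≤ d` in
`WithTop S`, i.e. `hjoin` computes least upper bounds there, and the semilattice laws follow.
-/

/-- Minimal common subclasses of `a` and `b`: the minimal elements of the set
`{c | a ≤ c ∧ b ≤ c}` of common upper bounds of `a` and `b`. -/
def mcs {S : Type*} [PartialOrder S] (a b : S) : Set S :=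
  {c | Minimal (fun c => a ≤ c ∧ b ≤ c) c}

open Classical in
/-- The join operator on the extended hierarchy `WithTop S`:
`join a b = c` if `a, b ∈ S` and `mcs a b = {c}`, and `⊤` otherwise. -/
noncomputable def hjoin {S : Type*} [PartialOrder S] : WithTop S → WithTop S → WithTop S
  | some a, some b => if h : ∃ c, mcs a b = {c} then some h.choose else ⊤
  | _, _ => ⊤

section

variable {S : Type*} [PartialOrder S]

open Classical in
lemma hjoin_coe_coe (a b : S) :
    hjoin (a : WithTop S) b = if h : ∃ c, mcs a b = {c} then (h.choose : WithTop S) else ⊤ :=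
  rfl

variable [WellFoundedLT S]

lemma exists_mem_mcs_le {a b e : S} (ha : a ≤ e) (hb : b ≤ e) : ∃ c ∈ mcs a b, c ≤ e := by
  obtain ⟨c, hce, hc⟩ := exists_minimal_le_of_wellFoundedLT (fun c => a ≤ c ∧ b ≤ c) e ⟨ha, hb⟩
  exact ⟨c, hc, hce⟩

lemma le_iff_of_mcs_eq_singleton {a b c : S} (h : mcs a b = {c}) (e : S) :
    c ≤ e ↔ a ≤ e ∧ b ≤ e := by
  have hc : c ∈ mcs a b := h ▸ rfl
  refine ⟨fun hce => ⟨hc.1.1.trans hce, hc.1.2.trans hce⟩, fun ⟨ha, hb⟩ => ?_⟩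
  obtain ⟨m, hm, hme⟩ := exists_mem_mcs_le ha hb
  obtain rfl : m = c := by rwa [h] at hm
  exact hme

lemma exists_mcs_eq_singleton (hwf : ∀ a b : S, (mcs a b).Subsingleton) {a b e : S}
    (ha : a ≤ e) (hb : b ≤ e) : ∃ c, mcs a b = {c} := by
  obtain ⟨c, hc, -⟩ := exists_mem_mcs_le ha hb
  exact ⟨c, (hwf a b).eq_singleton_of_mem hc⟩

lemma hjoin_le_iff (hwf : ∀ a b : S, (mcs a b).Subsingleton) {x y d : WithTop S} :
    hjoin x y ≤ d ↔ x ≤ d ∧ y ≤ d := by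
  match x, y, d with
  | ⊤, _, _ | (_ : S), ⊤, _ => simp +contextual [hjoin]
  | (_ : S), (_ : S), ⊤ => simp
  | (a : S), (b : S), (e : S) =>
    rw [hjoin_coe_coe]
    split_ifs with h
    · simpa only [WithTop.coe_le_coe] using le_iff_of_mcs_eq_singleton h.choose_spec e
    · simp only [top_le_iff, WithTop.coe_ne_top, false_iff, WithTop.coe_le_coe]
      rintro ⟨ha, hb⟩
      exact h (exists_mcs_eq_singleton hwf ha hb)

end

/-- In a well-formed hierarchy, the join operator on the extended hierarchy is
associative, commutative, and idempotent, i.e., it is a join-semilattice operation. -/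
theorem hjoin_assoc_comm_idem {S : Type*} [Fintype S] [PartialOrder S]
    (hwf : ∀ a b : S, (mcs a b).Subsingleton) :
    (∀ x y z : WithTop S, hjoin (hjoin x y) z = hjoin x (hjoin y z)) ∧
    (∀ x y : WithTop S, hjoin x y = hjoin y x) ∧
    (∀ x : WithTop S, hjoin x x = x) := by
  refine ⟨fun x y z => eq_of_forall_ge_iff fun d => ?_, fun x y => eq_of_forall_ge_iff fun d => ?_,
    fun x => eq_of_forall_ge_iff fun d => ?_⟩
  · simp only [hjoin_le_iff hwf, and_assoc]
  · simp only [hjoin_le_iff hwf, and_comm]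
  · simp only [hjoin_le_iff hwf, and_self]
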